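/- The K-subalgebra of A generated by the set {x_i * ∂_j : i, j ∈ Fin n with |i − j| = 1} ∪ {x_{n-1} * x_{n-1}, ∂_{n-1} * ∂_{n-1}} equals {w ∈ W : w * τ = τ * w}, the fixed-point subalgebra A_n(K)^ε of the sign automorphism of the Weyl algebra. (This is the assertion that the image of the homomorphism π : U(sp_{2n}) → A_n(K) of Lemma 7.4 coincides with A_n(K)^ε.) -/

import Mathlib

open MvPolynomial

/-- Multiplication by the variable `X a`. -/
noncomputable def Wx (K : Type*) [Field K] {E : Type*} (e : E) :
    Module.End K (MvPolynomial E K) :=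
  LinearMap.mulLeft K (X e)

/-- The partial derivative `∂_a`. -/
noncomputable def Wy (K : Type*) [Field K] {E : Type*} (e : E) :
    Module.End K (MvPolynomial E K) :=
  (pderiv e).toLinearMap

/-- The Weyl algebra `A_n(K)` in its standard representation: the subalgebra of
`End_K(K[x_0,…,x_{n-1}])` generated by the multiplication operators and the
partial derivatives. -/
noncomputable def WeylSubalgebra (K : Type*) [Field K] (E : Type*) :
    Subalgebra K (Module.End K (MvPolynomial E K)) :=
  Algebra.adjoin K ({g | ∃ e : E, g = Wx K e} ∪ {g | ∃ e : E, g = Wy K e})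

/-- The involution `τ` of `K[x_0,…,x_{n-1}]` determined by `τ(X_a) = −X_a`,
viewed as a `K`-linear endomorphism.  Conjugation by `τ` is the sign
automorphism `ε` of the Weyl algebra. -/
noncomputable def signInv (K : Type*) [Field K] (E : Type*) :
    Module.End K (MvPolynomial E K) :=
  (aeval (R := K) (fun e : E => -X e) : MvPolynomial E K →ₐ[K] MvPolynomial E K).toLinearMap

/-!
Conjugation by `τ` negates every `x_a` and `∂_a`, so on a word in these generators it acts by the
sign `(-1)^length`. The averaging map `w ↦ (w + τ w τ) / 2` is therefore the identity on the
`τ`-fixed elements and sends the Weyl algebra into the span of the even words, which is the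
subalgebra generated by the quadratic monomials.

Conversely, commutators of the given generators produce every quadratic monomial: the relation
`[x_i ∂_k, x_k ∂_j] = x_i ∂_j` (for `i ≠ j`) carries `x_i ∂_j` along the path `0 - 1 - ⋯ - (n-1)`,
`[∂_N², x_N²] = 4 x_N ∂_N + 2` gives the diagonal, and `[x_i ∂_N, x_N²] = 2 x_i x_N`,
`[∂_N², x_N ∂_j] = 2 ∂_N ∂_j` start the pure monomials, which then spread by further brackets
with the `x_i ∂_j`. Division by `2` is where the characteristic enters.
-/

open Pointwise

namespace MvPolynomial

theorem pderiv_pderiv_comm {R σ : Type*} [CommRing R] (i j : σ) (p : MvPolynomial σ R) :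
    pderiv i (pderiv j p) = pderiv j (pderiv i p) := by
  classical
  have h : ⁅pderiv (R := R) i, pderiv j⁆ = 0 := derivation_ext fun k => by
    rw [Derivation.commutator_apply]
    simp [Pi.single_apply, apply_ite]
  simpa [Derivation.commutator_apply, sub_eq_zero] using congrArg (· p) h

theorem bind₁_neg_X_pderiv {R σ : Type*} [CommRing R] (a : σ) (p : MvPolynomial σ R) :
    bind₁ (fun e => -X e) (pderiv a p) =
      -pderiv a (bind₁ (fun e : σ => -(X e : MvPolynomial σ R)) p) := by
  classical
  induction p using MvPolynomial.induction_on with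
  | C c => simp
  | add p q hp hq => simp [hp, hq, add_comm]
  | mul_X p k hp => simp [Pi.single_apply, hp, apply_ite (bind₁ _)]

end MvPolynomial

namespace Ring

variable {R : Type*} [Ring R]

theorem lie_mul (a b c : R) : ⁅a, b * c⁆ = ⁅a, b⁆ * c + b * ⁅a, c⁆ := by
  simp only [lie_def]; noncomm_ring

theorem mul_lie (a b c : R) : ⁅a * b, c⁆ = a * ⁅b, c⁆ + ⁅a, c⁆ * b := by
  simp only [lie_def]; noncomm_ring

end Ring

theorem lie_mem {R S : Type*} [Ring R] [SetLike S R] [SubringClass S R] {T : S} {a b : R}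
    (ha : a ∈ T) (hb : b ∈ T) : ⁅a, b⁆ ∈ T :=
  sub_mem (mul_mem ha hb) (mul_mem hb ha)

theorem Subalgebra.mem_of_two_nsmul_mem {R A : Type*} [CommRing R] [Ring A] [Algebra R A]
    [Invertible (2 : R)] {S : Subalgebra R A} {z : A} (hz : 2 • z ∈ S) : z ∈ S := by
  rw [two_nsmul, ← two_smul R] at hz
  exact (Submodule.smul_mem_iff'' (Subalgebra.toSubmodule S)).1 hz

section EvenSubalgebra

variable {R A : Type*} [CommRing R] [Ring A] [Algebra R A] {s : Set A} {τ : A}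

theorem even_or_odd_of_mem_closure (hτ : τ * τ = 1) (hs : ∀ g ∈ s, τ * g = -(g * τ)) {m : A}
    (hm : m ∈ Submonoid.closure s) :
    (m ∈ Algebra.adjoin R (s * s) ∧ τ * m * τ = m) ∨
      ((∀ g ∈ s, g * m ∈ Algebra.adjoin R (s * s)) ∧ τ * m * τ = -m) := by
  induction hm using Submonoid.closure_induction_left with
  | one => exact .inl ⟨one_mem _, by rw [mul_one, hτ]⟩
  | mul_left g hg m _ ih =>
    have hconj : τ * (g * m) * τ = -g * (τ * m * τ) := by
      rw [← mul_assoc τ g, hs g hg]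
      noncomm_ring
    rcases ih with ⟨hm, hτm⟩ | ⟨hm, hτm⟩
    · refine .inr ⟨fun g' hg' => ?_, by rw [hconj, hτm, neg_mul]⟩
      rw [← mul_assoc]
      exact mul_mem (Algebra.subset_adjoin (Set.mul_mem_mul hg' hg)) hm
    · exact .inl ⟨hm g hg, by rw [hconj, hτm, neg_mul_neg]⟩

theorem adjoin_mul_self_eq_inf_centralizer [Invertible (2 : R)] (hτ : τ * τ = 1)
    (hs : ∀ g ∈ s, τ * g = -(g * τ)) :
    Algebra.adjoin R (s * s) = Algebra.adjoin R s ⊓ Subalgebra.centralizer R {τ} := by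
  refine le_antisymm (Algebra.adjoin_le ?_) fun w ⟨hw, hwτ⟩ => ?_
  · rintro _ ⟨a, ha, b, hb, rfl⟩
    refine ⟨mul_mem (Algebra.subset_adjoin ha) (Algebra.subset_adjoin hb), ?_⟩
    rintro _ rfl
    rw [← mul_assoc, hs a ha, neg_mul, mul_assoc, hs b hb, mul_neg, neg_neg, mul_assoc]
  let average : A →ₗ[R] A :=
    ⅟(2 : R) • (LinearMap.id + LinearMap.mulRight R τ ∘ₗ LinearMap.mulLeft R τ)
  have haverage (m : A) : average m = ⅟(2 : R) • (m + τ * m * τ) := rfl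
  have hw_fixed : average w = w := by
    rw [haverage, (Subalgebra.mem_centralizer_iff R).1 hwτ τ rfl, mul_assoc, hτ, mul_one,
      ← two_smul R, smul_smul, invOf_mul_self, one_smul]
  have hspan : Submodule.span R (Submonoid.closure s : Set A) ≤
      (Algebra.adjoin R (s * s)).toSubmodule.comap average := by
    refine Submodule.span_le.2 fun m hm => ?_
    rcases even_or_odd_of_mem_closure (R := R) hτ hs hm with ⟨hm, hτm⟩ | ⟨-, hτm⟩
    · rwa [SetLike.mem_coe, Submodule.mem_comap, haverage, hτm, ← two_smul R, smul_smul,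
        invOf_mul_self, one_smul]
    · simp [haverage, hτm]
  rw [← hw_fixed]
  exact hspan (by rwa [← Algebra.adjoin_eq_span])

end EvenSubalgebra

/-- The canonical commutation relations of the Weyl algebra, with `y a` in the role of `∂_a`. -/
structure IsWeylFamily {A E : Type*} [Ring A] [DecidableEq E] (x y : E → A) : Prop where
  lie_x_x (a b : E) : ⁅x a, x b⁆ = 0
  lie_y_y (a b : E) : ⁅y a, y b⁆ = 0
  lie_y_x (a b : E) : ⁅y a, x b⁆ = if a = b then 1 else 0

namespace IsWeylFamily

section General

variable {A E : Type*} [Ring A] [DecidableEq E] {x y : E → A} (h : IsWeylFamily x y)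
include h

theorem lie_x_y (a b : E) : ⁅x a, y b⁆ = -if b = a then 1 else 0 := by
  rw [← h.lie_y_x, Ring.lie_def, Ring.lie_def, neg_sub]

theorem y_mul_x (a b : E) : y a * x b = x b * y a + if a = b then 1 else 0 := by
  rw [← h.lie_y_x, Ring.lie_def, add_sub_cancel]

theorem x_mul_x_comm (a b : E) : x a * x b = x b * x a :=
  sub_eq_zero.1 (h.lie_x_x a b)

theorem lie_x_mul_y_x_mul_y (i j k l : E) :
    ⁅x i * y j, x k * y l⁆ =
      (if j = k then x i * y l else 0) - if l = i then x k * y j else 0 := by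
  simp only [Ring.lie_mul, Ring.mul_lie, h.lie_x_x, h.lie_y_y, h.lie_x_y, h.lie_y_x]
  split_ifs <;> simp [sub_eq_add_neg]

theorem lie_x_mul_y_x_mul_x (i k j l : E) :
    ⁅x i * y k, x j * x l⁆ =
      (if k = j then x i * x l else 0) + if k = l then x i * x j else 0 := by
  simp only [Ring.lie_mul, Ring.mul_lie, h.lie_x_x, h.lie_y_x]
  split_ifs <;> simp [h.x_mul_x_comm j i]

theorem lie_y_mul_y_x_mul_y (k l i j : E) :
    ⁅y k * y l, x i * y j⁆ =
      (if k = i then y l * y j else 0) + if l = i then y k * y j else 0 := by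
  simp only [Ring.lie_mul, Ring.mul_lie, h.lie_y_y, h.lie_y_x]
  split_ifs <;> simp [add_mul, add_comm]

theorem lie_y_mul_y_x_mul_x (a : E) :
    ⁅y a * y a, x a * x a⁆ = 2 • (2 • (x a * y a) + 1) := by
  simp only [Ring.lie_mul, Ring.mul_lie, h.lie_y_x, if_true, mul_one, one_mul, add_mul, mul_add,
    h.y_mul_x]
  abel

theorem x_mul_y_eq_lie {i j : E} (hij : i ≠ j) (k : E) :
    x i * y j = ⁅x i * y k, x k * y j⁆ := by
  simp [h.lie_x_mul_y_x_mul_y, Ne.symm hij]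

variable {R : Type*} [CommRing R] [Algebra R A] {S : Subalgebra R A} [Invertible (2 : R)] (N : E)

theorem x_mul_y_mem (hoff : ∀ i j, i ≠ j → x i * y j ∈ S) (hxx : x N * x N ∈ S)
    (hyy : y N * y N ∈ S) (i j : E) : x i * y j ∈ S := by
  have hNN : x N * y N ∈ S := by
    have := lie_mem hyy hxx
    rw [h.lie_y_mul_y_x_mul_x] at this
    exact Subalgebra.mem_of_two_nsmul_mem
      ((add_mem_cancel_right (one_mem S)).1 (Subalgebra.mem_of_two_nsmul_mem this))
  rcases ne_or_eq i j with hij | rfl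
  · exact hoff i j hij
  rcases eq_or_ne i N with rfl | hiN
  · exact hNN
  have := lie_mem (hoff i N hiN) (hoff N i hiN.symm)
  rw [h.lie_x_mul_y_x_mul_y, if_pos rfl, if_pos rfl] at this
  simpa using add_mem this hNN

theorem x_mul_x_mem (hxy : ∀ i j, x i * y j ∈ S) (hxx : x N * x N ∈ S) (i j : E) :
    x i * x j ∈ S := by
  have hxN (i : E) : x i * x N ∈ S := by
    have := lie_mem (hxy i N) hxx
    rw [h.lie_x_mul_y_x_mul_x, if_pos rfl, ← two_nsmul] at this
    exact Subalgebra.mem_of_two_nsmul_mem this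
  rcases eq_or_ne j N with rfl | hjN
  · exact hxN i
  have := lie_mem (hxy i N) (hxN j)
  rwa [h.lie_x_mul_y_x_mul_x, if_neg hjN.symm, if_pos rfl, zero_add] at this

theorem y_mul_y_mem (hxy : ∀ i j, x i * y j ∈ S) (hyy : y N * y N ∈ S) (i j : E) :
    y i * y j ∈ S := by
  have hyN (j : E) : y N * y j ∈ S := by
    have := lie_mem hyy (hxy N j)
    rw [h.lie_y_mul_y_x_mul_y, if_pos rfl, ← two_nsmul] at this
    exact Subalgebra.mem_of_two_nsmul_mem this
  rcases eq_or_ne i N with rfl | hiN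
  · exact hyN j
  have := lie_mem (hyN i) (hxy N j)
  rwa [h.lie_y_mul_y_x_mul_y, if_pos rfl, if_neg hiN, add_zero] at this

omit [Invertible (2 : R)] in
theorem mul_self_subset (hxy : ∀ i j, x i * y j ∈ S) (hxx : ∀ i j, x i * x j ∈ S)
    (hyy : ∀ i j, y i * y j ∈ S) :
    (Set.range x ∪ Set.range y) * (Set.range x ∪ Set.range y) ⊆ S := by
  intro g hg
  obtain ⟨_, ⟨i, rfl⟩ | ⟨i, rfl⟩, _, ⟨j, rfl⟩ | ⟨j, rfl⟩, rfl⟩ := Set.mem_mul.1 hg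
  · exact hxx i j
  · exact hxy i j
  · rw [h.y_mul_x]
    exact add_mem (hxy j i) (by split_ifs; exacts [one_mem S, zero_mem S])
  · exact hyy i j

end General

variable {R A : Type*} [CommRing R] [Ring A] [Algebra R A] {S : Subalgebra R A} {n : ℕ}
  {x y : Fin n → A}

theorem x_mul_y_mem_of_ne (h : IsWeylFamily x y)
    (hadj : ∀ i j : Fin n, (i : ℕ) + 1 = j ∨ (j : ℕ) + 1 = i → x i * y j ∈ S)
    {i j : Fin n} (hij : i ≠ j) : x i * y j ∈ S := by
  have hpath (i : Fin n) (m : ℕ) (hm : i.val + 1 ≤ m) (hmn : m < n) :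
      x i * y ⟨m, hmn⟩ ∈ S ∧ x ⟨m, hmn⟩ * y i ∈ S := by
    induction m, hm using Nat.le_induction with
    | base => exact ⟨hadj _ _ (.inl rfl), hadj _ _ (.inr rfl)⟩
    | succ m hm ih =>
      obtain ⟨hik, hki⟩ := ih (by omega)
      have hne : (⟨m + 1, hmn⟩ : Fin n) ≠ i := fun e => by
        have := congrArg Fin.val e
        simp only at this
        omega
      refine ⟨?_, ?_⟩
      · rw [h.x_mul_y_eq_lie hne.symm ⟨m, by omega⟩]
        exact lie_mem hik (hadj _ _ (.inl rfl))
      · rw [h.x_mul_y_eq_lie hne ⟨m, by omega⟩]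
        exact lie_mem (hadj _ _ (.inr rfl)) hki
  rcases lt_or_gt_of_ne hij with hlt | hlt
  · exact (hpath i j (Fin.lt_def.1 hlt) j.isLt).1
  · exact (hpath j i (Fin.lt_def.1 hlt) i.isLt).2

theorem mul_self_subset_of_adjacent [Invertible (2 : R)] (h : IsWeylFamily x y) (N : Fin n)
    (hadj : ∀ i j : Fin n, (i : ℕ) + 1 = j ∨ (j : ℕ) + 1 = i → x i * y j ∈ S)
    (hxx : x N * x N ∈ S) (hyy : y N * y N ∈ S) :
    (Set.range x ∪ Set.range y) * (Set.range x ∪ Set.range y) ⊆ S := by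
  have hxy := h.x_mul_y_mem N (fun i j => h.x_mul_y_mem_of_ne hadj) hxx hyy
  exact h.mul_self_subset hxy (h.x_mul_x_mem N hxy hxx) (h.y_mul_y_mem N hxy hyy)

theorem adjoin_sp_generators_eq [Invertible (2 : R)] (h : IsWeylFamily x y) (N : Fin n) :
    Algebra.adjoin R ({g | ∃ i j : Fin n, ((i : ℕ) + 1 = (j : ℕ) ∨ (j : ℕ) + 1 = (i : ℕ)) ∧
        g = x i * y j} ∪ {x N * x N, y N * y N}) =
      Algebra.adjoin R ((Set.range x ∪ Set.range y) * (Set.range x ∪ Set.range y)) := by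
  refine le_antisymm (Algebra.adjoin_le ?_) (Algebra.adjoin_le (h.mul_self_subset_of_adjacent N
    (fun i j hij => Algebra.subset_adjoin (Or.inl ⟨i, j, hij, rfl⟩))
    (Algebra.subset_adjoin (Or.inr (Or.inl rfl))) (Algebra.subset_adjoin (Or.inr (Or.inr rfl)))))
  rintro _ (⟨i, j, -, rfl⟩ | rfl | rfl) <;> apply Algebra.subset_adjoin
  exacts [Set.mul_mem_mul (.inl ⟨i, rfl⟩) (.inr ⟨j, rfl⟩),
    Set.mul_mem_mul (.inl ⟨N, rfl⟩) (.inl ⟨N, rfl⟩),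
    Set.mul_mem_mul (.inr ⟨N, rfl⟩) (.inr ⟨N, rfl⟩)]

end IsWeylFamily

section WeylAlgebra

variable {K : Type*} [Field K] {E : Type*}

theorem isWeylFamily_Wx_Wy [DecidableEq E] : IsWeylFamily (Wx K (E := E)) (Wy K) where
  lie_x_x a b := LinearMap.ext fun p => by
    simp [Ring.lie_def, Wx]
    ring
  lie_y_y a b := LinearMap.ext fun p => by simp [Ring.lie_def, Wy, pderiv_pderiv_comm a b]
  lie_y_x a b := LinearMap.ext fun p => by
    split_ifs with hab
    · simp [Ring.lie_def, Wx, Wy, hab]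
    · simp [Ring.lie_def, Wx, Wy, pderiv_X_of_ne (Ne.symm hab)]

theorem WeylSubalgebra_eq_adjoin_range :
    WeylSubalgebra K E = Algebra.adjoin K (Set.range (Wx K) ∪ Set.range (Wy K)) := by
  simp only [WeylSubalgebra, Set.range, eq_comm]

theorem signInv_mul_signInv : signInv K E * signInv K E = 1 := by
  refine LinearMap.ext fun p => ?_
  have : (aeval (R := K) fun e : E => -X e).comp (aeval fun e => -X e) = AlgHom.id K _ :=
    algHom_ext fun e => by simp
  simpa [signInv] using DFunLike.congr_fun this p

theorem signInv_mul_eq_neg (g : Module.End K (MvPolynomial E K))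
    (hg : g ∈ Set.range (Wx K) ∪ Set.range (Wy K)) : signInv K E * g = -(g * signInv K E) := by
  rcases hg with ⟨a, rfl⟩ | ⟨a, rfl⟩ <;> refine LinearMap.ext fun p => ?_
  · simp [signInv, Wx]
  · simp [signInv, Wy, bind₁_neg_X_pderiv]

end WeylAlgebra

/-- The subalgebra of the Weyl algebra generated by
`{x_i ∂_j : |i − j| = 1} ∪ {x_{n-1}², ∂_{n-1}²}` equals the fixed-point
subalgebra `A_n(K)^ε`, i.e. the set of Weyl-algebra elements commuting with `τ`:
the image of `π : U(sp_{2n}) → A_n(K)` is `A_n(K)^ε`. -/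
theorem adjoin_sp_eq_sign_fixed (K : Type*) [Field K] [CharZero K] (n : ℕ) (hn : 1 ≤ n) :
    (Algebra.adjoin K
        ({g : Module.End K (MvPolynomial (Fin n) K) |
            ∃ i j : Fin n, ((i : ℕ) + 1 = (j : ℕ) ∨ (j : ℕ) + 1 = (i : ℕ)) ∧
              g = Wx K i * Wy K j} ∪
          {Wx K (⟨n - 1, by omega⟩ : Fin n) * Wx K (⟨n - 1, by omega⟩ : Fin n),
            Wy K (⟨n - 1, by omega⟩ : Fin n) * Wy K (⟨n - 1, by omega⟩ : Fin n)}) :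
        Set (Module.End K (MvPolynomial (Fin n) K))) =
      {w : Module.End K (MvPolynomial (Fin n) K) |
        w ∈ WeylSubalgebra K (Fin n) ∧ w * signInv K (Fin n) = signInv K (Fin n) * w} := by
  let : Invertible (2 : K) := invertibleOfNonzero two_ne_zero
  rw [isWeylFamily_Wx_Wy.adjoin_sp_generators_eq,
    adjoin_mul_self_eq_inf_centralizer signInv_mul_signInv signInv_mul_eq_neg,
    WeylSubalgebra_eq_adjoin_range]
  ext w
  simp [Set.mem_centralizer_iff, eq_comm]
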